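/- arXiv:2503.02171 — 7 statements merged into one kernel-verified Lean document; each statement's English description precedes it below -/
import Mathlib

section
/- Suppose P₁, P₂, T are real n×n matrices such that the columns of the 2n×n matrix [P₁; P₂] span an invariant subspace of the Hamiltonian matrix H, i.e. H·[P₁; P₂] = [P₁; P₂]·T (equivalently, A·P₁ − BR⁻¹Bᵀ·P₂ = P₁·T and −Q·P₁ − Aᵀ·P₂ = P₂·T), and suppose P₁ is invertible. Then P := P₂·P₁⁻¹ satisfies the continuous-time algebraic Riccati equation AᵀP + PA − PBR⁻¹BᵀP + Q = 0. -/
open Matrix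

/-! If `H [P₁; P₂] = [P₁; P₂] T` with `P₁` invertible, then `X := P₂ P₁⁻¹` satisfies `X P₁ = P₂`,
so both block rows of the invariance equation, multiplied on the right by `P₁⁻¹`, compute
`P₂ T P₁⁻¹`: the first row gives `X A − X G X` (with `G = BR⁻¹Bᵀ`), the second `−Q − AᵀX`.
Equating the two is the Riccati equation. -/

theorem riccati_eq_of_block_invariant {α : Type*} [Ring α] {a b c d p₂ t : α} (p₁ : αˣ)
    (h₁ : a * p₁ + b * p₂ = p₁ * t) (h₂ : c * p₁ + d * p₂ = p₂ * t) :
    c + d * (p₂ * ↑p₁⁻¹) = p₂ * ↑p₁⁻¹ * a + p₂ * ↑p₁⁻¹ * b * (p₂ * ↑p₁⁻¹) := by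
  set x := p₂ * ↑p₁⁻¹
  have hx : x * p₁ = p₂ := Units.inv_mul_cancel_right p₂ p₁
  calc c + d * x = (c * p₁ + d * p₂) * ↑p₁⁻¹ := by
        rw [add_mul, Units.mul_inv_cancel_right, mul_assoc]
    _ = x * (p₁ * t) * ↑p₁⁻¹ := by rw [h₂, ← hx]; simp only [mul_assoc]
    _ = x * a + x * b * x := by
        simp only [← h₁, x, mul_add, add_mul, mul_assoc, Units.mul_inv, mul_one]

theorem invariant_subspace_solves_care_general {n m : ℕ}
    (A Q : Matrix (Fin n) (Fin n) ℝ) (B : Matrix (Fin n) (Fin m) ℝ)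
    (R : Matrix (Fin m) (Fin m) ℝ)
    (P₁ P₂ T : Matrix (Fin n) (Fin n) ℝ) (hP₁ : IsUnit P₁)
    (hInv : Matrix.fromBlocks A (-(B * R⁻¹ * Bᵀ)) (-Q) (-Aᵀ) * Matrix.fromRows P₁ P₂ =
      Matrix.fromRows P₁ P₂ * T) :
    Aᵀ * (P₂ * P₁⁻¹) + (P₂ * P₁⁻¹) * A
      - (P₂ * P₁⁻¹) * B * R⁻¹ * Bᵀ * (P₂ * P₁⁻¹) + Q = 0 := by
  obtain ⟨u, rfl⟩ := hP₁
  rw [fromBlocks_mul_fromRows, fromRows_mul, fromRows_ext_iff] at hInv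
  have riccati := riccati_eq_of_block_invariant u hInv.1 hInv.2
  rw [coe_units_inv] at riccati
  rw [← sub_eq_zero.mpr riccati.symm]
  simp only [Matrix.mul_assoc, Matrix.mul_neg, Matrix.neg_mul]
  abel

/-- If the columns of `[P₁; P₂]` span an invariant subspace of the
Hamiltonian matrix `H = [[A, −BR⁻¹Bᵀ], [−Q, −Aᵀ]]` (i.e. `H·[P₁;P₂] = [P₁;P₂]·T`) and `P₁`
is invertible, then `P := P₂·P₁⁻¹` solves the continuous-time algebraic Riccati equation. -/
theorem invariant_subspace_solves_care {n m : ℕ}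
    (A Q : Matrix (Fin n) (Fin n) ℝ) (B : Matrix (Fin n) (Fin m) ℝ)
    (R : Matrix (Fin m) (Fin m) ℝ) (hR : IsUnit R)
    (P₁ P₂ T : Matrix (Fin n) (Fin n) ℝ) (hP₁ : IsUnit P₁)
    (hInv : Matrix.fromBlocks A (-(B * R⁻¹ * Bᵀ)) (-Q) (-Aᵀ) * Matrix.fromRows P₁ P₂ =
      Matrix.fromRows P₁ P₂ * T) :
    Aᵀ * (P₂ * P₁⁻¹) + (P₂ * P₁⁻¹) * A
      - (P₂ * P₁⁻¹) * B * R⁻¹ * Bᵀ * (P₂ * P₁⁻¹) + Q = 0 :=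
  invariant_subspace_solves_care_general A Q B R P₁ P₂ T hP₁ hInv
end

section
/- If the pair (A,B) is controllable in the PBH sense and the pair (Q,A) is observable in the PBH sense, then every complex eigenvalue λ of the Hamiltonian matrix H has nonzero real part; in particular H has no purely imaginary and no zero eigenvalues. -/
/-!
Let `H (x, y) = λ (x, y)` with `λ` purely imaginary, and write `S = B R⁻¹ Bᵀ`. Pairing the
first block row with `y`, the second with `x`, and using that `y* A x` and `x* Aᴴ y` are
conjugate, the terms in `λ` cancel and leave `x* Q x + y* S y = 0`. Both forms are
nonnegative, so `Q x = 0` and `Bᵀ y = 0`. Then `A x = λ x` and `Aᵀ y = -λ y`, and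
observability (if `x ≠ 0`) or controllability (if `y ≠ 0`) is violated.
-/

open Matrix
open scoped ComplexOrder

namespace Matrix

variable {n m : Type*}

def hamiltonian {R : Type*} [Neg R] [Star R] (A S Q : Matrix n n R) :
    Matrix (n ⊕ n) (n ⊕ n) R :=
  fromBlocks A (-S) (-Q) (-Aᴴ)

section

variable [Fintype n] [Fintype m]

theorem fromBlocks_mulVec_sumElim_eq_smul_iff {R : Type*} [Semiring R]
    (A : Matrix n n R) (B : Matrix n m R) (C : Matrix m n R) (D : Matrix m m R) (l : R)
    (x : n → R) (y : m → R) :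
    fromBlocks A B C D *ᵥ Sum.elim x y = l • Sum.elim x y ↔
      A *ᵥ x + B *ᵥ y = l • x ∧ C *ᵥ x + D *ᵥ y = l • y := by
  simp [fromBlocks_mulVec, funext_iff, Sum.forall]

theorem star_dotProduct_mulVec {R : Type*} [NonUnitalSemiring R] [StarRing R]
    (M : Matrix m n R) (x : n → R) (y : m → R) :
    star (star y ⬝ᵥ M *ᵥ x) = star x ⬝ᵥ Mᴴ *ᵥ y := by
  rw [star_dotProduct x, star_mulVec, conjTranspose_conjTranspose, ← dotProduct_mulVec]

theorem hamiltonian_mulVec_eq_smul_iff {R : Type*} [Ring R] [StarRing R]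
    (A S Q : Matrix n n R) (l : R) (x y : n → R) :
    hamiltonian A S Q *ᵥ Sum.elim x y = l • Sum.elim x y ↔
      A *ᵥ x = l • x + S *ᵥ y ∧ Aᴴ *ᵥ y = -(Q *ᵥ x + l • y) := by
  rw [hamiltonian, fromBlocks_mulVec_sumElim_eq_smul_iff, neg_mulVec, neg_mulVec, neg_mulVec,
    add_neg_eq_iff_eq_add, neg_add_eq_iff_eq_add, neg_eq_iff_eq_neg]

theorem hamiltonian_dotProduct_mulVec_add_eq_zero {R : Type*} [CommRing R] [StarRing R]
    {A S Q : Matrix n n R} {l : R} {x y : n → R} (hl : star l = -l)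
    (h : hamiltonian A S Q *ᵥ Sum.elim x y = l • Sum.elim x y) :
    star x ⬝ᵥ Q *ᵥ x + star y ⬝ᵥ Sᴴ *ᵥ y = 0 := by
  obtain ⟨hAx, hAy⟩ := (hamiltonian_mulVec_eq_smul_iff A S Q l x y).mp h
  have hconj := star_dotProduct_mulVec A x y
  rw [hAx, hAy, dotProduct_add, star_add, star_dotProduct_mulVec, dotProduct_smul, smul_eq_mul,
    star_mul', hl, ← star_dotProduct, dotProduct_neg, dotProduct_add, dotProduct_smul,
    smul_eq_mul] at hconj
  linear_combination hconj

section RCLike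

variable {𝕜 : Type*} [RCLike 𝕜]

theorem dotProduct_mul_mul_conjTranspose_mulVec (B : Matrix n m 𝕜) (P : Matrix m m 𝕜)
    (y : n → 𝕜) :
    star y ⬝ᵥ (B * P * Bᴴ) *ᵥ y = star (Bᴴ *ᵥ y) ⬝ᵥ P *ᵥ (Bᴴ *ᵥ y) := by
  rw [← mulVec_mulVec, ← mulVec_mulVec, dotProduct_mulVec, star_mulVec,
    conjTranspose_conjTranspose]

theorem mulVec_eq_zero_of_hamiltonian_mulVec_eq_smul {A Q : Matrix n n 𝕜} {B : Matrix n m 𝕜}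
    {P : Matrix m m 𝕜} (hQ : Q.PosSemidef) (hP : P.PosDef) {l : 𝕜} {x y : n → 𝕜}
    (hl : star l = -l) (h : hamiltonian A (B * P * Bᴴ) Q *ᵥ Sum.elim x y = l • Sum.elim x y) :
    Q *ᵥ x = 0 ∧ Bᴴ *ᵥ y = 0 := by
  have hsum := hamiltonian_dotProduct_mulVec_add_eq_zero hl h
  rw [(isHermitian_mul_mul_conjTranspose B hP.isHermitian).eq,
    dotProduct_mul_mul_conjTranspose_mulVec] at hsum
  obtain ⟨hx, hy⟩ := (add_eq_zero_iff_of_nonneg (hQ.dotProduct_mulVec_nonneg x)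
    (hP.posSemidef.dotProduct_mulVec_nonneg _)).mp hsum
  refine ⟨(hQ.dotProduct_mulVec_zero_iff x).mp hx, ?_⟩
  by_contra hBy
  exact (hP.dotProduct_mulVec_pos hBy).ne' hy

theorem re_ne_zero_of_hamiltonian_mulVec_eq_smul {A Q : Matrix n n 𝕜} {B : Matrix n m 𝕜}
    {P : Matrix m m 𝕜} (hQ : Q.PosSemidef) (hP : P.PosDef)
    (hctrb : ∀ (l : 𝕜) (y : n → 𝕜), y ≠ 0 → Aᴴ *ᵥ y = l • y → Bᴴ *ᵥ y ≠ 0)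
    (hobs : ∀ (l : 𝕜) (x : n → 𝕜), x ≠ 0 → A *ᵥ x = l • x → Q *ᵥ x ≠ 0)
    {l : 𝕜} {v : n ⊕ n → 𝕜} (hv : v ≠ 0) (h : hamiltonian A (B * P * Bᴴ) Q *ᵥ v = l • v) :
    RCLike.re l ≠ 0 := by
  intro hre
  have hl : star l = -l := RCLike.ext (by simp [hre]) (by simp)
  rw [← Sum.elim_comp_inl_inr v] at hv h
  generalize v ∘ Sum.inl = x, v ∘ Sum.inr = y at hv h
  obtain ⟨hQx, hBy⟩ := mulVec_eq_zero_of_hamiltonian_mulVec_eq_smul hQ hP hl h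
  obtain ⟨hAx, hAy⟩ := (hamiltonian_mulVec_eq_smul_iff A _ Q l x y).mp h
  rw [← mulVec_mulVec, hBy, mulVec_zero, add_zero] at hAx
  rw [hQx, zero_add, ← neg_smul] at hAy
  by_cases hx : x = 0
  · refine hctrb (-l) y ?_ hAy hBy
    rintro rfl
    exact hv (by rw [hx, Sum.elim_zero_zero])
  · exact hobs l x hx hAx hQx

end RCLike

end

theorem conjTranspose_map_ofReal (M : Matrix m n ℝ) :
    (M.map Complex.ofReal)ᴴ = (M.map Complex.ofReal)ᵀ := by
  ext i j
  simp

variable [Fintype n]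

theorem map_ofReal_mul {o : Type*} (M : Matrix m n ℝ) (N : Matrix n o ℝ) :
    (M * N).map Complex.ofReal = M.map Complex.ofReal * N.map Complex.ofReal :=
  Matrix.map_mul (f := Complex.ofRealHom)

theorem PosSemidef.map_ofReal {M : Matrix n n ℝ} (hM : M.PosSemidef) :
    (M.map Complex.ofReal).PosSemidef := by
  classical
  obtain ⟨C, rfl⟩ : ∃ C : Matrix n n ℝ, M = star C * C := by
    open MatrixOrder in exact CStarAlgebra.nonneg_iff_eq_star_mul_self.mp hM.nonneg
  rw [map_ofReal_mul, star_eq_conjTranspose, conjTranspose_map _ fun _ ↦ by simp]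
  exact posSemidef_conjTranspose_mul_self _

theorem PosDef.map_ofReal [DecidableEq n] {M : Matrix n n ℝ} (hM : M.PosDef) :
    (M.map Complex.ofReal).PosDef := by
  refine hM.posSemidef.map_ofReal.posDef_iff_isUnit.mpr ?_
  rw [isUnit_iff_isUnit_det, isUnit_iff_ne_zero]
  convert Complex.ofReal_ne_zero.mpr hM.det_pos.ne'
  exact (Complex.ofRealHom.map_det M).symm

end Matrix

/-- Under PBH controllability of `(A,B)` and PBH observability of `(Q,A)`,
every complex eigenvalue of the Hamiltonian matrix `H = [[A, −BR⁻¹Bᵀ], [−Q, −Aᵀ]]` has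
nonzero real part. -/
theorem hamiltonian_no_imaginary_eigenvalues {n m : ℕ}
    (A Q : Matrix (Fin n) (Fin n) ℝ) (B : Matrix (Fin n) (Fin m) ℝ)
    (R : Matrix (Fin m) (Fin m) ℝ)
    (hQ : Q.PosSemidef) (hR : R.PosDef)
    (hctrb : ∀ (l : ℂ) (y : Fin n → ℂ), y ≠ 0 →
      (A.map Complex.ofReal)ᵀ.mulVec y = l • y → (B.map Complex.ofReal)ᵀ.mulVec y ≠ 0)
    (hobs : ∀ (l : ℂ) (x : Fin n → ℂ), x ≠ 0 →
      (A.map Complex.ofReal).mulVec x = l • x → (Q.map Complex.ofReal).mulVec x ≠ 0) :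
    ∀ (l : ℂ) (v : Fin n ⊕ Fin n → ℂ), v ≠ 0 →
      ((Matrix.fromBlocks A (-(B * R⁻¹ * Bᵀ)) (-Q) (-Aᵀ)).map Complex.ofReal).mulVec v
        = l • v → l.re ≠ 0 := by
  intro l v hv hev
  have hH : (fromBlocks A (-(B * R⁻¹ * Bᵀ)) (-Q) (-Aᵀ)).map Complex.ofReal =
      hamiltonian (A.map Complex.ofReal)
        (B.map Complex.ofReal * R⁻¹.map Complex.ofReal * (B.map Complex.ofReal)ᴴ)
        (Q.map Complex.ofReal) := by
    simp only [hamiltonian, fromBlocks_map, Matrix.map_neg _ Complex.ofReal_neg, map_ofReal_mul,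
      transpose_map, conjTranspose_map_ofReal]
  rw [hH] at hev
  refine re_ne_zero_of_hamiltonian_mulVec_eq_smul hQ.map_ofReal hR.inv.map_ofReal ?_ hobs hv hev
  simpa only [conjTranspose_map_ofReal] using hctrb
end

section
/- Suppose P₁, P₂ are complex n×n matrices and Λ₁ is a complex n×n diagonal matrix such that H·[P₁; P₂] = [P₁; P₂]·Λ₁ (matrices regarded over ℂ), and suppose P₁ is invertible. Let P := P₂·P₁⁻¹. Then the closed-loop matrix A_cl := A − BR⁻¹BᵀP satisfies A_cl = P₁·Λ₁·P₁⁻¹; in particular the eigenvalues of A_cl are exactly the diagonal entries of Λ₁. -/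
/-! The top block row of `H [P₁; P₂] = [P₁; P₂] Λ` reads `A P₁ - B R⁻¹ Bᵀ P₂ = P₁ Λ`; multiplying
on the right by `P₁⁻¹` gives `A_cl = P₁ Λ P₁⁻¹`. Similar matrices have the same spectrum, and the
spectrum of a diagonal matrix is the set of its diagonal entries. -/

open Matrix

namespace Matrix

variable {R : Type*}

theorem fromBlocks_mul_fromRows_eq_fromRows_mul_iff [Ring R] {n₁ n₂ k : Type*}
    [Fintype n₁] [Fintype n₂] [Fintype k]
    (A : Matrix n₁ n₁ R) (B : Matrix n₁ n₂ R) (C : Matrix n₂ n₁ R) (D : Matrix n₂ n₂ R)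
    (X : Matrix n₁ k R) (Y : Matrix n₂ k R) (Λ : Matrix k k R) :
    fromBlocks A B C D * fromRows X Y = fromRows X Y * Λ ↔
      A * X + B * Y = X * Λ ∧ C * X + D * Y = Y * Λ := by
  rw [fromBlocks_mul_fromRows, fromRows_mul, fromRows_ext_iff]

theorem add_mul_mul_inv_eq_of_mul_add_mul_eq [CommRing R] {n m : Type*}
    [Fintype n] [DecidableEq n] [Fintype m]
    {A X Λ : Matrix n n R} {B : Matrix n m R} {Y : Matrix m n R}
    (h : A * X + B * Y = X * Λ) (hX : IsUnit X) :
    A + B * (Y * X⁻¹) = X * Λ * X⁻¹ := by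
  rw [← h, add_mul, Matrix.mul_assoc, Matrix.mul_assoc,
    mul_nonsing_inv _ ((isUnit_iff_isUnit_det X).mp hX), mul_one]

theorem spectrum_mul_mul_nonsing_inv [CommRing R] {n : Type*} [Fintype n] [DecidableEq n]
    {P : Matrix n n R} (hP : IsUnit P) (M : Matrix n n R) :
    spectrum R (P * M * P⁻¹) = spectrum R M := by
  lift P to (Matrix n n R)ˣ using hP
  rw [← coe_units_inv, spectrum.units_conjugate]

theorem exists_mulVec_eq_smul_iff_mem_spectrum {K n : Type*} [Field K] [Fintype n]
    [DecidableEq n] (M : Matrix n n K) (μ : K) :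
    (∃ v : n → K, v ≠ 0 ∧ M *ᵥ v = μ • v) ↔ μ ∈ spectrum K M := by
  rw [← spectrum_toLin', ← Module.End.hasEigenvalue_iff_mem_spectrum,
    Module.End.hasEigenvalue_iff, Submodule.ne_bot_iff]
  simp only [Module.End.mem_eigenspace_iff, toLin'_apply, and_comm]

theorem IsDiag.spectrum_eq {K n : Type*} [Field K] [Fintype n] [DecidableEq n]
    {M : Matrix n n K} (hM : M.IsDiag) : spectrum K M = Set.range M.diag := by
  rw [← hM.diagonal_diag, spectrum_diagonal, diag_diagonal]

end Matrix

theorem closed_loop_eigenvalues_general {n m : ℕ}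
    (A Q : Matrix (Fin n) (Fin n) ℝ) (B : Matrix (Fin n) (Fin m) ℝ)
    (R : Matrix (Fin m) (Fin m) ℝ)
    (P₁ P₂ Λ : Matrix (Fin n) (Fin n) ℂ) (hΛ : Λ.IsDiag) (hP₁ : IsUnit P₁)
    (hInv :
      Matrix.fromBlocks (A.map Complex.ofReal)
          (-((B.map Complex.ofReal) * (R.map Complex.ofReal)⁻¹ * (B.map Complex.ofReal)ᵀ))
          (-(Q.map Complex.ofReal)) (-(A.map Complex.ofReal)ᵀ) * Matrix.fromRows P₁ P₂ =
        Matrix.fromRows P₁ P₂ * Λ) :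
    A.map Complex.ofReal -
        (B.map Complex.ofReal) * (R.map Complex.ofReal)⁻¹ * (B.map Complex.ofReal)ᵀ *
          (P₂ * P₁⁻¹) = P₁ * Λ * P₁⁻¹ ∧
    ∀ μ : ℂ,
      (∃ v : Fin n → ℂ, v ≠ 0 ∧
        (A.map Complex.ofReal -
          (B.map Complex.ofReal) * (R.map Complex.ofReal)⁻¹ * (B.map Complex.ofReal)ᵀ *
            (P₂ * P₁⁻¹)).mulVec v = μ • v) ↔ ∃ i : Fin n, Λ i i = μ := by
  have htop := ((fromBlocks_mul_fromRows_eq_fromRows_mul_iff _ _ _ _ _ _ _).mp hInv).1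
  have hcl : A.map Complex.ofReal -
      (B.map Complex.ofReal) * (R.map Complex.ofReal)⁻¹ * (B.map Complex.ofReal)ᵀ *
        (P₂ * P₁⁻¹) = P₁ * Λ * P₁⁻¹ := by
    rw [sub_eq_add_neg, ← Matrix.neg_mul]
    exact add_mul_mul_inv_eq_of_mul_add_mul_eq htop hP₁
  refine ⟨hcl, fun μ => ?_⟩
  rw [hcl, exists_mulVec_eq_smul_iff_mem_spectrum, spectrum_mul_mul_nonsing_inv hP₁,
    hΛ.spectrum_eq]
  rfl

/-- If `H·[P₁;P₂] = [P₁;P₂]·Λ₁` over `ℂ` with `Λ₁` diagonal and `P₁`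
invertible, then the closed-loop matrix `A_cl = A − BR⁻¹Bᵀ·(P₂P₁⁻¹)` equals `P₁·Λ₁·P₁⁻¹`;
in particular its eigenvalues are exactly the diagonal entries of `Λ₁`. -/
theorem closed_loop_eigenvalues {n m : ℕ}
    (A Q : Matrix (Fin n) (Fin n) ℝ) (B : Matrix (Fin n) (Fin m) ℝ)
    (R : Matrix (Fin m) (Fin m) ℝ) (hR : IsUnit R)
    (P₁ P₂ Λ : Matrix (Fin n) (Fin n) ℂ) (hΛ : Λ.IsDiag) (hP₁ : IsUnit P₁)
    (hInv :
      Matrix.fromBlocks (A.map Complex.ofReal)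
          (-((B.map Complex.ofReal) * (R.map Complex.ofReal)⁻¹ * (B.map Complex.ofReal)ᵀ))
          (-(Q.map Complex.ofReal)) (-(A.map Complex.ofReal)ᵀ) * Matrix.fromRows P₁ P₂ =
        Matrix.fromRows P₁ P₂ * Λ) :
    A.map Complex.ofReal -
        (B.map Complex.ofReal) * (R.map Complex.ofReal)⁻¹ * (B.map Complex.ofReal)ᵀ *
          (P₂ * P₁⁻¹) = P₁ * Λ * P₁⁻¹ ∧
    ∀ μ : ℂ,
      (∃ v : Fin n → ℂ, v ≠ 0 ∧
        (A.map Complex.ofReal -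
          (B.map Complex.ofReal) * (R.map Complex.ofReal)⁻¹ * (B.map Complex.ofReal)ᵀ *
            (P₂ * P₁⁻¹)).mulVec v = μ • v) ↔ ∃ i : Fin n, Λ i i = μ :=
  closed_loop_eigenvalues_general A Q B R P₁ P₂ Λ hΛ hP₁ hInv
end

section
/- Suppose P₁, P₂ are complex n×n matrices and Λ₁ is a complex n×n diagonal matrix with diagonal entries λ₁,…,λₙ such that H·[P₁; P₂] = [P₁; P₂]·Λ₁ (matrices regarded over ℂ), and suppose P₁ is invertible. Then the closed-loop matrix A_cl := A − BR⁻¹Bᵀ·P₂·P₁⁻¹ is Hurwitz (every complex eigenvalue of A_cl has negative real part) if and only if Re(λᵢ) < 0 for every i = 1,…,n. -/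
/-!
The top block row of the invariant-subspace equation reads `A P₁ - B R⁻¹ Bᵀ P₂ = P₁ Λ`, i.e.
`A_cl P₁ = P₁ Λ`. Since `P₁` is invertible, `A_cl` is similar to the diagonal matrix `Λ`, so its
eigenvalues are exactly the diagonal entries of `Λ`.
-/

open Matrix Module End

theorem Matrix.exists_mulVec_eq_smul_iff_mem_spectrum_s6 {K n : Type*} [Field K] [Fintype n]
    [DecidableEq n] (M : Matrix n n K) (μ : K) :
    (∃ v : n → K, v ≠ 0 ∧ M *ᵥ v = μ • v) ↔ μ ∈ spectrum K M := by
  rw [← spectrum_toLin', ← hasEigenvalue_iff_mem_spectrum]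
  constructor
  · rintro ⟨v, hv, hMv⟩
    exact hasEigenvalue_of_hasEigenvector ⟨mem_eigenspace_iff.mpr (by simpa using hMv), hv⟩
  · intro hμ
    obtain ⟨v, hv⟩ := hμ.exists_hasEigenvector
    exact ⟨v, hv.2, by simpa using mem_eigenspace_iff.mp hv.1⟩

theorem spectrum_eq_of_mul_eq_mul {R A : Type*} [CommSemiring R] [Ring A] [Algebra R A]
    {a b u : A} (hu : IsUnit u) (h : a * u = u * b) : spectrum R a = spectrum R b := by
  have ha : a = ↑hu.unit * b * ↑hu.unit⁻¹ := by
    rw [IsUnit.unit_spec, ← h, mul_assoc, IsUnit.mul_val_inv, mul_one]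
  rw [ha, spectrum.units_conjugate]

theorem closed_loop_hurwitz_iff_general {n m : ℕ}
    (A Q : Matrix (Fin n) (Fin n) ℝ) (B : Matrix (Fin n) (Fin m) ℝ)
    (R : Matrix (Fin m) (Fin m) ℝ)
    (P₁ P₂ Λ : Matrix (Fin n) (Fin n) ℂ) (hΛ : Λ.IsDiag) (hP₁ : IsUnit P₁)
    (hInv :
      Matrix.fromBlocks (A.map Complex.ofReal)
          (-((B.map Complex.ofReal) * (R.map Complex.ofReal)⁻¹ * (B.map Complex.ofReal)ᵀ))
          (-(Q.map Complex.ofReal)) (-(A.map Complex.ofReal)ᵀ) * Matrix.fromRows P₁ P₂ =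
        Matrix.fromRows P₁ P₂ * Λ) :
    (∀ μ : ℂ,
      (∃ v : Fin n → ℂ, v ≠ 0 ∧
        (A.map Complex.ofReal -
          (B.map Complex.ofReal) * (R.map Complex.ofReal)⁻¹ * (B.map Complex.ofReal)ᵀ *
            (P₂ * P₁⁻¹)).mulVec v = μ • v) → μ.re < 0) ↔
      ∀ i : Fin n, (Λ i i).re < 0 := by
  set S := (B.map Complex.ofReal) * (R.map Complex.ofReal)⁻¹ * (B.map Complex.ofReal)ᵀ
  have htop : A.map Complex.ofReal * P₁ + -S * P₂ = P₁ * Λ := by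
    rw [fromBlocks_mul_fromRows, fromRows_mul, fromRows_ext_iff] at hInv
    exact hInv.1
  have hsim : (A.map Complex.ofReal - S * (P₂ * P₁⁻¹)) * P₁ = P₁ * Λ := by
    rw [sub_mul, mul_assoc S, mul_assoc P₂, nonsing_inv_mul _ ((isUnit_iff_isUnit_det _).mp hP₁),
      mul_one, ← htop, neg_mul, sub_eq_add_neg]
  have hspec : spectrum ℂ (A.map Complex.ofReal - S * (P₂ * P₁⁻¹)) = Set.range Λ.diag := by
    rw [spectrum_eq_of_mul_eq_mul hP₁ hsim, ← spectrum_diagonal, hΛ.diagonal_diag]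
  simp_rw [exists_mulVec_eq_smul_iff_mem_spectrum_s6, hspec, Set.forall_mem_range, diag_apply]

/-- If `H·[P₁;P₂] = [P₁;P₂]·Λ₁` over `ℂ` with `Λ₁` diagonal and `P₁`
invertible, then the closed-loop matrix `A_cl = A − BR⁻¹Bᵀ·P₂P₁⁻¹` is Hurwitz (every
complex eigenvalue has negative real part) iff every diagonal entry of `Λ₁` has negative
real part. -/
theorem closed_loop_hurwitz_iff {n m : ℕ}
    (A Q : Matrix (Fin n) (Fin n) ℝ) (B : Matrix (Fin n) (Fin m) ℝ)
    (R : Matrix (Fin m) (Fin m) ℝ) (hR : IsUnit R)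
    (P₁ P₂ Λ : Matrix (Fin n) (Fin n) ℂ) (hΛ : Λ.IsDiag) (hP₁ : IsUnit P₁)
    (hInv :
      Matrix.fromBlocks (A.map Complex.ofReal)
          (-((B.map Complex.ofReal) * (R.map Complex.ofReal)⁻¹ * (B.map Complex.ofReal)ᵀ))
          (-(Q.map Complex.ofReal)) (-(A.map Complex.ofReal)ᵀ) * Matrix.fromRows P₁ P₂ =
        Matrix.fromRows P₁ P₂ * Λ) :
    (∀ μ : ℂ,
      (∃ v : Fin n → ℂ, v ≠ 0 ∧
        (A.map Complex.ofReal -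
          (B.map Complex.ofReal) * (R.map Complex.ofReal)⁻¹ * (B.map Complex.ofReal)ᵀ *
            (P₂ * P₁⁻¹)).mulVec v = μ • v) → μ.re < 0) ↔
      ∀ i : Fin n, (Λ i i).re < 0 :=
  closed_loop_hurwitz_iff_general A Q B R P₁ P₂ Λ hΛ hP₁ hInv
end

section
/- Suppose P and P′ are symmetric real n×n matrices that both satisfy the continuous-time algebraic Riccati equation AᵀP + PA − PBR⁻¹BᵀP + Q = 0, and suppose both closed-loop matrices A − BR⁻¹BᵀP and A − BR⁻¹BᵀP′ are Hurwitz (every complex eigenvalue has negative real part). Then P = P′. In other words, at most one symmetric solution of the Riccati equation yields a stable closed-loop system. -/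
/-!
Writing `S = B R⁻¹ Bᵀ`, subtracting the Riccati equations of `P` and `P'` shows that
`X = P - P'` solves the Sylvester equation `(A - S P)ᵀ X = X (-(A - S P'))`. Both closed-loop
matrices are Hurwitz, so the spectra of the two coefficient matrices lie in opposite open
half-planes. A Sylvester equation `M X = X N` with disjoint spectra only has the solution `X = 0`:
with `p` the characteristic polynomial of `N`, Cayley–Hamilton gives `p(M) X = X p(N) = 0`, and
`p(M)` is invertible by the spectral mapping theorem.
-/

open Matrix Polynomial

namespace Matrix

variable {K R ι κ : Type*} [Fintype ι] [DecidableEq ι] [Fintype κ] [DecidableEq κ]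

theorem spectrum_transpose [CommRing R] (M : Matrix ι ι R) : spectrum R Mᵀ = spectrum R M := by
  ext μ
  simp only [mem_spectrum_iff_not_isUnit_eval_charpoly, charpoly_transpose]

theorem exists_mulVec_eq_smul_of_mem_spectrum [Field K] {M : Matrix ι ι K} {μ : K}
    (h : μ ∈ spectrum K M) : ∃ v ≠ 0, M *ᵥ v = μ • v := by
  rw [← spectrum_toLin', ← Module.End.hasEigenvalue_iff_mem_spectrum] at h
  obtain ⟨v, hv⟩ := h.exists_hasEigenvector
  exact ⟨v, hv.2, hv.apply_eq_smul⟩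

theorem pow_mul_eq_mul_pow_of_mul_eq_mul [Semiring R] {M : Matrix ι ι R} {N : Matrix κ κ R}
    {X : Matrix ι κ R} (h : M * X = X * N) (k : ℕ) : M ^ k * X = X * N ^ k := by
  induction k with
  | zero => simp
  | succ k ih => rw [pow_succ, pow_succ, Matrix.mul_assoc, h, ← Matrix.mul_assoc, ih,
      Matrix.mul_assoc]

theorem aeval_mul_eq_mul_aeval_of_mul_eq_mul [CommSemiring R] {M : Matrix ι ι R}
    {N : Matrix κ κ R} {X : Matrix ι κ R} (h : M * X = X * N) (p : R[X]) :
    aeval M p * X = X * aeval N p := by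
  induction p using Polynomial.induction_on' with
  | add p q hp hq => rw [map_add, map_add, Matrix.add_mul, Matrix.mul_add, hp, hq]
  | monomial k a =>
    simp only [aeval_monomial, Algebra.algebraMap_eq_smul_one, Matrix.smul_mul, Matrix.mul_smul,
      Matrix.one_mul, pow_mul_eq_mul_pow_of_mul_eq_mul h]

theorem eq_zero_of_mul_eq_mul_of_disjoint_spectrum [Field K] [IsAlgClosed K]
    {M : Matrix ι ι K} {N : Matrix κ κ K} {X : Matrix ι κ K}
    (hspec : Disjoint (spectrum K M) (spectrum K N)) (h : M * X = X * N) : X = 0 := by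
  cases isEmpty_or_nonempty κ
  · exact Subsingleton.elim _ _
  have hunit : IsUnit (aeval M N.charpoly) := by
    rw [← spectrum.zero_notMem_iff K, spectrum.map_polynomial_aeval_of_degree_pos M _
      (by simp [charpoly_degree_eq_dim, Fintype.card_pos])]
    rintro ⟨μ, hμM, hμN⟩
    exact hspec.ne_of_mem hμM (mem_spectrum_iff_isRoot_charpoly.mpr hμN) rfl
  calc X = (aeval M N.charpoly)⁻¹ * (aeval M N.charpoly * X) :=
        (nonsing_inv_mul_cancel_left _ _ ((isUnit_iff_isUnit_det _).mp hunit)).symm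
    _ = 0 := by rw [aeval_mul_eq_mul_aeval_of_mul_eq_mul h, aeval_self_charpoly, Matrix.mul_zero,
        Matrix.mul_zero]

end Matrix

theorem closedLoop_sylvester_of_riccati {R n : Type*} [CommRing R] [Fintype n]
    {A S Q P P' : Matrix n n R} (hS : Sᵀ = S) (hP : Pᵀ = P)
    (hRic : Aᵀ * P + P * A - P * S * P + Q = 0)
    (hRic' : Aᵀ * P' + P' * A - P' * S * P' + Q = 0) :
    (A - S * P)ᵀ * (P - P') = (P - P') * -(A - S * P') := by
  rw [← sub_eq_zero]
  calc (A - S * P)ᵀ * (P - P') - (P - P') * -(A - S * P')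
      = (Aᵀ * P + P * A - P * S * P + Q) - (Aᵀ * P' + P' * A - P' * S * P' + Q) := by
        rw [transpose_sub, transpose_mul, hS, hP]; noncomm_ring
    _ = 0 := by rw [hRic, hRic', sub_zero]

theorem stabilizing_care_solution_unique_general {n m : ℕ}
    (A Q : Matrix (Fin n) (Fin n) ℝ) (B : Matrix (Fin n) (Fin m) ℝ)
    (R : Matrix (Fin m) (Fin m) ℝ) (hRsymm : R.IsSymm)
    (P P' : Matrix (Fin n) (Fin n) ℝ) (hPsymm : P.IsSymm)
    (hP : Aᵀ * P + P * A - P * B * R⁻¹ * Bᵀ * P + Q = 0)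
    (hP' : Aᵀ * P' + P' * A - P' * B * R⁻¹ * Bᵀ * P' + Q = 0)
    (hHurwitz : ∀ (μ : ℂ) (v : Fin n → ℂ), v ≠ 0 →
      ((A - B * R⁻¹ * Bᵀ * P).map Complex.ofReal).mulVec v = μ • v → μ.re < 0)
    (hHurwitz' : ∀ (μ : ℂ) (v : Fin n → ℂ), v ≠ 0 →
      ((A - B * R⁻¹ * Bᵀ * P').map Complex.ofReal).mulVec v = μ • v → μ.re < 0) :
    P = P' := by
  set S := B * R⁻¹ * Bᵀ
  have hS : Sᵀ = S := by
    simp only [S, transpose_mul, transpose_transpose, transpose_nonsing_inv, hRsymm.eq,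
      Matrix.mul_assoc]
  have hsyl := congrArg Complex.ofRealHom.mapMatrix <|
    closedLoop_sylvester_of_riccati hS hPsymm.eq (by simpa only [S, Matrix.mul_assoc] using hP)
      (by simpa only [S, Matrix.mul_assoc] using hP')
  simp only [map_mul, map_neg, RingHom.mapMatrix_apply, transpose_map] at hsyl
  have hΔ : (P - P').map Complex.ofRealHom = 0 := by
    refine eq_zero_of_mul_eq_mul_of_disjoint_spectrum
      (Set.disjoint_left.mpr fun μ hμ hμ' => ?_) hsyl
    rw [spectrum_transpose] at hμ
    rw [← spectrum.neg_eq, Set.mem_neg] at hμ'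
    obtain ⟨v, hv, hAv⟩ := exists_mulVec_eq_smul_of_mem_spectrum hμ
    obtain ⟨w, hw, hA'w⟩ := exists_mulVec_eq_smul_of_mem_spectrum hμ'
    have hstable := hHurwitz μ v hv hAv
    have hstable' := hHurwitz' (-μ) w hw hA'w
    rw [Complex.neg_re] at hstable'
    linarith
  rw [← Matrix.map_zero _ (map_zero Complex.ofRealHom)] at hΔ
  exact sub_eq_zero.mp (Matrix.map_injective Complex.ofReal_injective hΔ)

/-- At most one symmetric solution of the continuous-time algebraic
Riccati equation yields a Hurwitz (stable) closed-loop matrix. -/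
theorem stabilizing_care_solution_unique {n m : ℕ}
    (A Q : Matrix (Fin n) (Fin n) ℝ) (B : Matrix (Fin n) (Fin m) ℝ)
    (R : Matrix (Fin m) (Fin m) ℝ) (hRsymm : R.IsSymm) (hR : IsUnit R)
    (P P' : Matrix (Fin n) (Fin n) ℝ) (hPsymm : P.IsSymm) (hP'symm : P'.IsSymm)
    (hP : Aᵀ * P + P * A - P * B * R⁻¹ * Bᵀ * P + Q = 0)
    (hP' : Aᵀ * P' + P' * A - P' * B * R⁻¹ * Bᵀ * P' + Q = 0)
    (hHurwitz : ∀ (μ : ℂ) (v : Fin n → ℂ), v ≠ 0 →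
      ((A - B * R⁻¹ * Bᵀ * P).map Complex.ofReal).mulVec v = μ • v → μ.re < 0)
    (hHurwitz' : ∀ (μ : ℂ) (v : Fin n → ℂ), v ≠ 0 →
      ((A - B * R⁻¹ * Bᵀ * P').map Complex.ofReal).mulVec v = μ • v → μ.re < 0) :
    P = P' :=
  stabilizing_care_solution_unique_general A Q B R hRsymm P P' hPsymm hP hP' hHurwitz hHurwitz'
end

section
/- The discrete-time Hamiltonian matrix H_d is symplectic: with J = [[0, I], [−I, 0]] the real 2n×2n block matrix, one has H_dᵀ·J·H_d = J. Consequently H_d is invertible, and if λ ∈ ℂ is an eigenvalue of H_d then λ ≠ 0 and 1/λ is also an eigenvalue of H_d. -/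
open Matrix

namespace Matrix

theorem IsSymm.mul_mul_transpose_same {ι κ R : Type*} [CommSemiring R] [Fintype κ]
    {M : Matrix κ κ R} (hM : M.IsSymm) (B : Matrix ι κ R) : (B * M * Bᵀ).IsSymm := by
  rw [IsSymm, transpose_mul, transpose_mul, transpose_transpose, hM.eq, Matrix.mul_assoc]

variable {ι : Type*} [Fintype ι] [DecidableEq ι]

section Eigen

variable {K : Type*} [Field K]

theorem exists_mulVec_eq_smul_iff_det_sub_eq_zero (M : Matrix ι ι K) (l : K) :
    (∃ v ≠ 0, M *ᵥ v = l • v) ↔ (M - l • 1).det = 0 := by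
  simp only [← exists_mulVec_eq_zero_iff, sub_mulVec, smul_mulVec, one_mulVec, sub_eq_zero]

theorem exists_mulVec_eq_smul_of_transpose {M : Matrix ι ι K} {l : K}
    (h : ∃ v ≠ 0, Mᵀ *ᵥ v = l • v) : ∃ v ≠ 0, M *ᵥ v = l • v := by
  rw [exists_mulVec_eq_smul_iff_det_sub_eq_zero] at h ⊢
  rwa [← det_transpose, transpose_sub, transpose_smul, transpose_one]

/-- `J` carries an eigenvector of `H` for `l` to an eigenvector of `Hᵀ` for `l⁻¹`. -/
theorem transpose_mulVec_mulVec_eq_inv_smul {H J : Matrix ι ι K}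
    (hHJ : Hᵀ * J * H = J) (hJ : IsUnit J.det) {v : ι → K} (hv : v ≠ 0) {l : K}
    (hHv : H *ᵥ v = l • v) :
    l ≠ 0 ∧ J *ᵥ v ≠ 0 ∧ Hᵀ *ᵥ (J *ᵥ v) = l⁻¹ • (J *ᵥ v) := by
  have hJv : J *ᵥ v ≠ 0 := fun h0 => hJ.ne_zero (exists_mulVec_eq_zero_iff.mp ⟨v, hv, h0⟩)
  have hscaled : l • (Hᵀ *ᵥ (J *ᵥ v)) = J *ᵥ v := by
    rw [← mulVec_smul, ← mulVec_smul, ← hHv, mulVec_mulVec, mulVec_mulVec, hHJ]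
  have hl : l ≠ 0 := by
    rintro rfl
    exact hJv (by rw [← hscaled, zero_smul])
  exact ⟨hl, hJv, (eq_inv_smul_iff₀ hl).mpr hscaled⟩

end Eigen

theorem isUnit_of_transpose_mul_mul_self_eq {R : Type*} [CommRing R] {H J : Matrix ι ι R}
    (hHJ : Hᵀ * J * H = J) (hJ : IsUnit J.det) : IsUnit H := by
  rw [isUnit_iff_isUnit_det]
  refine isUnit_det_of_left_inverse (B := J⁻¹ * Hᵀ * J) ?_
  rw [mul_assoc, mul_assoc, ← mul_assoc Hᵀ, hHJ, nonsing_inv_mul J hJ]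

theorem exists_map_mulVec_eq_inv_smul {R K : Type*} [CommRing R] [Field K] (f : R →+* K)
    {H J : Matrix ι ι R} (hHJ : Hᵀ * J * H = J) (hJ : IsUnit J.det) {l : K}
    (h : ∃ v ≠ 0, H.map f *ᵥ v = l • v) :
    l ≠ 0 ∧ ∃ w ≠ 0, H.map f *ᵥ w = l⁻¹ • w := by
  obtain ⟨v, hv, hHv⟩ := h
  have hHJf : (H.map f)ᵀ * J.map f * H.map f = J.map f := by
    simpa only [RingHom.mapMatrix_apply, map_mul, transpose_map] using
      congrArg f.mapMatrix hHJ
  have hJf : IsUnit (J.map f).det := by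
    simpa only [RingHom.mapMatrix_apply, RingHom.map_det] using hJ.map f
  obtain ⟨hl, hJv, hHtJv⟩ := transpose_mulVec_mulVec_eq_inv_smul hHJf hJf hv hHv
  exact ⟨hl, exists_mulVec_eq_smul_of_transpose ⟨_, hJv, hHtJv⟩⟩

theorem isUnit_det_fromBlocks_zero_one_neg_one_zero {R : Type*} [CommRing R] :
    IsUnit (fromBlocks 0 1 (-1) 0 : Matrix (ι ⊕ ι) (ι ⊕ ι) R).det :=
  isUnit_det_of_right_inverse (B := fromBlocks 0 (-1) 1 0) <| by
    simp [fromBlocks_multiply, ← fromBlocks_one]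

/-- The discrete-time Hamiltonian matrix, with `S` standing for `B R⁻¹ Bᵀ`. -/
noncomputable def discreteHamiltonian {R : Type*} [CommRing R] (A S Q : Matrix ι ι R) :
    Matrix (ι ⊕ ι) (ι ⊕ ι) R :=
  fromBlocks (A + S * (Aᵀ)⁻¹ * Q) (-(S * (Aᵀ)⁻¹)) (-((Aᵀ)⁻¹ * Q)) (Aᵀ)⁻¹

theorem discreteHamiltonian_transpose_mul_mul_self {R : Type*} [CommRing R]
    {A S Q : Matrix ι ι R} (hA : IsUnit A) (hS : S.IsSymm) (hQ : Q.IsSymm) :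
    (discreteHamiltonian A S Q)ᵀ * fromBlocks 0 1 (-1) 0 * discreteHamiltonian A S Q =
      fromBlocks 0 1 (-1) 0 := by
  have hAd : IsUnit A.det := (isUnit_iff_isUnit_det A).mp hA
  have hATd : IsUnit Aᵀ.det := isUnit_det_transpose A hAd
  have hinvT : ((Aᵀ)⁻¹)ᵀ = A⁻¹ := by rw [← transpose_nonsing_inv, transpose_transpose]
  rw [discreteHamiltonian, fromBlocks_transpose, fromBlocks_multiply, fromBlocks_multiply,
    fromBlocks_inj]
  simp only [transpose_add, transpose_mul, transpose_neg, hinvT, hS.eq, hQ.eq, mul_zero, zero_add,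
    add_zero, mul_one, neg_mul, mul_neg, neg_neg, mul_add, add_mul, mul_assoc,
    nonsing_inv_mul _ hAd, mul_nonsing_inv _ hATd, mul_nonsing_inv_cancel_left (h := hATd)]
  refine ⟨?_, ?_, ?_, ?_⟩ <;> abel

end Matrix

theorem discrete_hamiltonian_symplectic_general {n m : ℕ}
    (A Q : Matrix (Fin n) (Fin n) ℝ) (hA : IsUnit A) (hQ : Q.IsSymm)
    (B : Matrix (Fin n) (Fin m) ℝ)
    (R : Matrix (Fin m) (Fin m) ℝ) (hRsymm : R.IsSymm) :
    (Matrix.fromBlocks (A + B * R⁻¹ * Bᵀ * (Aᵀ)⁻¹ * Q) (-(B * R⁻¹ * Bᵀ * (Aᵀ)⁻¹))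
          (-((Aᵀ)⁻¹ * Q)) ((Aᵀ)⁻¹))ᵀ *
        Matrix.fromBlocks 0 1 (-1) 0 *
        Matrix.fromBlocks (A + B * R⁻¹ * Bᵀ * (Aᵀ)⁻¹ * Q) (-(B * R⁻¹ * Bᵀ * (Aᵀ)⁻¹))
          (-((Aᵀ)⁻¹ * Q)) ((Aᵀ)⁻¹) =
      Matrix.fromBlocks 0 1 (-1) 0 ∧
    IsUnit (Matrix.fromBlocks (A + B * R⁻¹ * Bᵀ * (Aᵀ)⁻¹ * Q) (-(B * R⁻¹ * Bᵀ * (Aᵀ)⁻¹))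
          (-((Aᵀ)⁻¹ * Q)) ((Aᵀ)⁻¹)) ∧
    ∀ l : ℂ,
      (∃ v : Fin n ⊕ Fin n → ℂ, v ≠ 0 ∧
        ((Matrix.fromBlocks (A + B * R⁻¹ * Bᵀ * (Aᵀ)⁻¹ * Q) (-(B * R⁻¹ * Bᵀ * (Aᵀ)⁻¹))
            (-((Aᵀ)⁻¹ * Q)) ((Aᵀ)⁻¹)).map Complex.ofReal).mulVec v = l • v) →
      l ≠ 0 ∧
        ∃ w : Fin n ⊕ Fin n → ℂ, w ≠ 0 ∧
          ((Matrix.fromBlocks (A + B * R⁻¹ * Bᵀ * (Aᵀ)⁻¹ * Q) (-(B * R⁻¹ * Bᵀ * (Aᵀ)⁻¹))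
              (-((Aᵀ)⁻¹ * Q)) ((Aᵀ)⁻¹)).map Complex.ofReal).mulVec w = (1 / l) • w := by
  have hsymp :=
    discreteHamiltonian_transpose_mul_mul_self hA (hRsymm.inv.mul_mul_transpose_same B) hQ
  have hJ := isUnit_det_fromBlocks_zero_one_neg_one_zero (ι := Fin n) (R := ℝ)
  refine ⟨hsymp, isUnit_of_transpose_mul_mul_self_eq hsymp hJ, fun l hl => ?_⟩
  rw [one_div]
  exact exists_map_mulVec_eq_inv_smul Complex.ofRealHom hsymp hJ hl

/-- The discrete-time Hamiltonian matrix `H_d` is symplectic: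
`H_dᵀ·J·H_d = J` with `J = [[0, I], [−I, 0]]`. Consequently `H_d` is invertible, and if
`λ ∈ ℂ` is an eigenvalue of `H_d`, then `λ ≠ 0` and `1/λ` is also an eigenvalue of `H_d`. -/
theorem discrete_hamiltonian_symplectic {n m : ℕ}
    (A Q : Matrix (Fin n) (Fin n) ℝ) (hA : IsUnit A) (hQ : Q.IsSymm)
    (B : Matrix (Fin n) (Fin m) ℝ)
    (R : Matrix (Fin m) (Fin m) ℝ) (hRsymm : R.IsSymm) (hR : IsUnit R) :
    (Matrix.fromBlocks (A + B * R⁻¹ * Bᵀ * (Aᵀ)⁻¹ * Q) (-(B * R⁻¹ * Bᵀ * (Aᵀ)⁻¹))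
          (-((Aᵀ)⁻¹ * Q)) ((Aᵀ)⁻¹))ᵀ *
        Matrix.fromBlocks 0 1 (-1) 0 *
        Matrix.fromBlocks (A + B * R⁻¹ * Bᵀ * (Aᵀ)⁻¹ * Q) (-(B * R⁻¹ * Bᵀ * (Aᵀ)⁻¹))
          (-((Aᵀ)⁻¹ * Q)) ((Aᵀ)⁻¹) =
      Matrix.fromBlocks 0 1 (-1) 0 ∧
    IsUnit (Matrix.fromBlocks (A + B * R⁻¹ * Bᵀ * (Aᵀ)⁻¹ * Q) (-(B * R⁻¹ * Bᵀ * (Aᵀ)⁻¹))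
          (-((Aᵀ)⁻¹ * Q)) ((Aᵀ)⁻¹)) ∧
    ∀ l : ℂ,
      (∃ v : Fin n ⊕ Fin n → ℂ, v ≠ 0 ∧
        ((Matrix.fromBlocks (A + B * R⁻¹ * Bᵀ * (Aᵀ)⁻¹ * Q) (-(B * R⁻¹ * Bᵀ * (Aᵀ)⁻¹))
            (-((Aᵀ)⁻¹ * Q)) ((Aᵀ)⁻¹)).map Complex.ofReal).mulVec v = l • v) →
      l ≠ 0 ∧
        ∃ w : Fin n ⊕ Fin n → ℂ, w ≠ 0 ∧
          ((Matrix.fromBlocks (A + B * R⁻¹ * Bᵀ * (Aᵀ)⁻¹ * Q) (-(B * R⁻¹ * Bᵀ * (Aᵀ)⁻¹))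
              (-((Aᵀ)⁻¹ * Q)) ((Aᵀ)⁻¹)).map Complex.ofReal).mulVec w = (1 / l) • w :=
  discrete_hamiltonian_symplectic_general A Q hA hQ B R hRsymm
end

section
/- Suppose V is differentiable on E, V(x_eq) = 0, V(x) > 0 for every x ≠ x_eq, and V satisfies the undiscounted Hamilton–Jacobi–Bellman identity along the policy π: for every x ∈ E, ⟨∇V(x), f(x, π(x))⟩ = −l(x, π(x)), where l(x, π(x)) ≥ 0 for all x. Then the equilibrium x_eq is Lyapunov stable for the closed-loop system: for every ε > 0 there exists δ > 0 such that every differentiable curve x : [0,∞) → E satisfying x′(t) = f(x(t), π(x(t))) for all t ≥ 0 and ‖x(0) − x_eq‖ < δ satisfies ‖x(t) − x_eq‖ < ε for all t ≥ 0. -/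
/-! By the HJB identity, `V` is a Lyapunov function for the closed loop: along a trajectory
`d/dt V(x t) = ⟪∇V(x t), f(x t, π(x t))⟫ = -l(x t, π(x t)) ≤ 0`, so `V ∘ x` is antitone.
As `V` is continuous with a strict minimum at `x_eq`, it has a positive minimum on the compact
sphere of radius `ε` around `x_eq` and stays below that minimum on a small ball. A trajectory
starting in that ball can therefore never reach the sphere. -/

open Metric Set
open scoped RealInnerProductSpace

section StrictMinimum

variable {X : Type*} [PseudoMetricSpace X] {V : X → ℝ} {c : X}

theorem Continuous.exists_ball_lt_on_sphere [ProperSpace X] (hV : Continuous V)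
    (hVc : ∀ y, y ≠ c → V c < V y) {ε : ℝ} (hε : 0 < ε) :
    ∃ δ > 0, ∀ y ∈ ball c δ, ∀ z ∈ sphere c ε, V y < V z := by
  rcases (sphere c ε).eq_empty_or_nonempty with hempty | hne
  · exact ⟨1, one_pos, fun _ _ z hz => by simp [hempty] at hz⟩
  obtain ⟨z₀, hz₀, hz₀min⟩ := (isCompact_sphere c ε).exists_isMinOn hne hV.continuousOn
  have hz₀c : z₀ ≠ c := by
    rintro rfl
    simp [hε.ne] at hz₀
  obtain ⟨δ, hδ, hball⟩ :=
    Metric.isOpen_iff.1 (isOpen_Iio.preimage hV) c (hVc z₀ hz₀c)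
  exact ⟨δ, hδ, fun y hy z hz => (hball hy).trans_le (hz₀min hz)⟩

theorem exists_forall_dist_lt_of_antitoneOn_comp [ProperSpace X] (hV : Continuous V)
    (hVc : ∀ y, y ≠ c → V c < V y) {ε : ℝ} (hε : 0 < ε) :
    ∃ δ > 0, ∀ x : ℝ → X, Continuous x → AntitoneOn (V ∘ x) (Ici 0) →
      dist (x 0) c < δ → ∀ t, 0 ≤ t → dist (x t) c < ε := by
  obtain ⟨δ, hδ, hlt⟩ := hV.exists_ball_lt_on_sphere hVc hε
  refine ⟨min δ ε, lt_min hδ hε, fun x hx hanti hx₀ t ht => ?_⟩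
  by_contra! hescape
  obtain ⟨s, hs, hxs⟩ : ∃ s ∈ Icc 0 t, dist (x s) c = ε :=
    intermediate_value_Icc ht (hx.dist continuous_const).continuousOn
      ⟨(hx₀.trans_le (min_le_right _ _)).le, hescape⟩
  have hbelow : V (x 0) < V (x s) :=
    hlt _ (hx₀.trans_le (min_le_left _ _)) _ (mem_sphere.2 hxs)
  exact (hanti self_mem_Ici hs.1 hs.1).not_gt hbelow

end StrictMinimum

theorem antitoneOn_comp_of_fderiv_apply_deriv_nonpos {E : Type*} [NormedAddCommGroup E]
    [NormedSpace ℝ E] {V : E → ℝ} {x : ℝ → E} (hV : Differentiable ℝ V)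
    (hx : Differentiable ℝ x) (hdecr : ∀ s, 0 < s → fderiv ℝ V (x s) (deriv x s) ≤ 0) :
    AntitoneOn (V ∘ x) (Ici 0) := by
  have hderiv : ∀ s, HasDerivAt (V ∘ x) (fderiv ℝ V (x s) (deriv x s)) s :=
    fun s => (hV (x s)).hasFDerivAt.comp_hasDerivAt s (hx s).hasDerivAt
  refine antitoneOn_of_deriv_nonpos (convex_Ici 0) (hV.continuous.comp hx.continuous).continuousOn
    (fun s _ => (hderiv s).differentiableAt.differentiableWithinAt) fun s hs => ?_
  rw [interior_Ici] at hs
  exact (hderiv s).deriv ▸ hdecr s hs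

/-- If `V` is differentiable, positive definite about `x_eq`
(`V(x_eq) = 0`, `V(x) > 0` for `x ≠ x_eq`), and satisfies the undiscounted HJB identity
`⟨∇V(x), f(x, π(x))⟩ = −l(x, π(x))` with `l(x, π(x)) ≥ 0`, then `x_eq` is Lyapunov stable
for the closed-loop system. -/
theorem hjb_solution_lyapunov_stable {n : ℕ} {U : Type*}
    (f : EuclideanSpace ℝ (Fin n) × U → EuclideanSpace ℝ (Fin n))
    (π : EuclideanSpace ℝ (Fin n) → U)
    (l : EuclideanSpace ℝ (Fin n) × U → ℝ)
    (V : EuclideanSpace ℝ (Fin n) → ℝ)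
    (xeq : EuclideanSpace ℝ (Fin n))
    (hV : Differentiable ℝ V)
    (hV0 : V xeq = 0)
    (hVpos : ∀ x : EuclideanSpace ℝ (Fin n), x ≠ xeq → 0 < V x)
    (hHJB : ∀ x : EuclideanSpace ℝ (Fin n), ⟪gradient V x, f (x, π x)⟫ = - l (x, π x))
    (hl : ∀ x : EuclideanSpace ℝ (Fin n), 0 ≤ l (x, π x)) :
    ∀ ε : ℝ, 0 < ε → ∃ δ : ℝ, 0 < δ ∧
      ∀ x : ℝ → EuclideanSpace ℝ (Fin n), Differentiable ℝ x →
        (∀ t : ℝ, 0 ≤ t → deriv x t = f (x t, π (x t))) →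
        ‖x 0 - xeq‖ < δ → ∀ t : ℝ, 0 ≤ t → ‖x t - xeq‖ < ε := by
  intro ε hε
  obtain ⟨δ, hδ, hstable⟩ :=
    exists_forall_dist_lt_of_antitoneOn_comp hV.continuous (c := xeq)
      (fun y hy => hV0 ▸ hVpos y hy) hε
  refine ⟨δ, hδ, fun x hx hode hx₀ t ht => ?_⟩
  have hanti : AntitoneOn (V ∘ x) (Ici 0) :=
    antitoneOn_comp_of_fderiv_apply_deriv_nonpos hV hx fun s hs => by
      rw [← inner_gradient_left, hode s hs.le, hHJB, neg_nonpos]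
      exact hl (x s)
  simpa only [dist_eq_norm] using
    hstable x hx.continuous hanti (by rwa [dist_eq_norm]) t ht
end
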